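/- arXiv:1408.0422 — 2 statements merged into one kernel-verified Lean document; each statement's English description precedes it below -/
import Mathlib

section
/- Let (𝔛, d) be a nonempty set, (X, ‖·‖) a Banach space, and F, A : 𝔛 → X maps such that A is a bijection and there exists 0 < K < 1 with ‖F[u] − F[v] − (A[u] − A[v])‖ ≤ K‖A[u] − A[v]‖ for all u, v ∈ 𝔛. Then F is a bijection from 𝔛 onto X. -/
/-- Campanato's near operators theorem: if `A : 𝔛 → X` is a bijection onto a
Banach space and `F` is near `A`, i.e. `‖F[u]−F[v]−(A[u]−A[v])‖ ≤ K‖A[u]−A[v]‖` with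
`0 < K < 1`, then `F` is a bijection as well. -/
theorem stmt9 {𝔛 : Type*} [Nonempty 𝔛] {X : Type*} [NormedAddCommGroup X]
    [NormedSpace ℝ X] [CompleteSpace X] (F A : 𝔛 → X) (hA : Function.Bijective A)
    (K : ℝ) (hK0 : 0 < K) (hK1 : K < 1)
    (hnear : ∀ u v : 𝔛, ‖F u - F v - (A u - A v)‖ ≤ K * ‖A u - A v‖) :
    Function.Bijective F := by
  set e := Equiv.ofBijective A hA with he
  set g : X → X := F ∘ e.symm with hg
  have hnear' : ∀ x y : X, ‖g x - g y - (x - y)‖ ≤ K * ‖x - y‖ := by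
    intro x y
    have := hnear (e.symm x) (e.symm y)
    simpa [hg, he, Equiv.ofBijective_apply_symm_apply] using this
  have hgbij : Function.Bijective g := by
    constructor
    · intro x y hxy
      have h := hnear' x y
      rw [hxy] at h
      simp only [sub_self, zero_sub, norm_neg] at h
      by_contra hne
      have hpos : 0 < ‖x - y‖ := by
        rwa [norm_pos_iff, sub_ne_zero]
      nlinarith
    · intro f
      set T : X → X := fun x => x - g x + f with hT
      have hlip : LipschitzWith ⟨K, hK0.le⟩ T := by
        apply LipschitzWith.of_dist_le_mul
        intro x y
        simp only [hT, dist_eq_norm]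
        have : x - g x + f - (y - g y + f) = -(g x - g y - (x - y)) := by abel
        rw [this, norm_neg]
        exact hnear' x y
      have hcontr : ContractingWith ⟨K, hK0.le⟩ T := ⟨by exact_mod_cast hK1, hlip⟩
      obtain ⟨x, hx, -⟩ := hcontr.exists_fixedPoint (Classical.arbitrary X)
        (by simp [edist_ne_top])
      refine ⟨x, ?_⟩
      have hx' : x - g x + f = x := hx
      have h : g x - f = 0 := by
        have h2 : x - (x - g x + f) = x - x := congrArg (fun z => x - z) hx'
        rw [sub_self] at h2
        rw [← h2]; abel
      exact sub_eq_zero.mp h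
  have hF : F = g ∘ e := by
    funext u; simp [hg, he]
  rw [hF]
  exact hgbij.comp e.bijective
end

section
/- Under the hypotheses of Campanato's near operators theorem (‖F[u]−F[v]−(A[u]−A[v])‖ ≤ K‖A[u]−A[v]‖ with 0 < K < 1), the map T[u] := A^{-1}(A[u] − (F[u] − f)) is a contraction with constant K on the metric space (𝔛, d) where d(u,v) = ‖A[u]−A[v]‖, for any fixed f ∈ X. -/
/-- under the nearness hypothesis, the map
`T[u] = A⁻¹(A[u] − (F[u] − f))` is a `K`-contraction for the metric
`d(u,v) = ‖A[u] − A[v]‖`. -/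
theorem stmt10 {𝔛 : Type*} [Nonempty 𝔛] {X : Type*} [NormedAddCommGroup X]
    [NormedSpace ℝ X] [CompleteSpace X] (F A : 𝔛 → X) (hA : Function.Bijective A)
    (K : ℝ) (hK0 : 0 < K) (hK1 : K < 1)
    (hnear : ∀ u v : 𝔛, ‖F u - F v - (A u - A v)‖ ≤ K * ‖A u - A v‖) (f : X)
    (T : 𝔛 → 𝔛) (hT : ∀ u, T u = Function.invFun A (A u - (F u - f))) :
    ∀ u v : 𝔛, ‖A (T u) - A (T v)‖ ≤ K * ‖A u - A v‖ := by
  intro u v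
  have hATa : ∀ w, A (T w) = A w - (F w - f) := by
    intro w
    rw [hT w, Function.invFun_eq (hA.surjective _)]
  rw [hATa u, hATa v]
  have h := hnear u v
  calc ‖A u - (F u - f) - (A v - (F v - f))‖
      = ‖F u - F v - (A u - A v)‖ := by rw [← norm_neg]; congr 1; abel
    _ ≤ K * ‖A u - A v‖ := h
end
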